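/- arXiv:1510.04310 — 3 statements merged into one kernel-verified Lean document; each statement's English description precedes it below -/
import Mathlib

section
/- For all n ≥ 2, Sf_{n,n-1}(p,q) = cf_{n,n-1}(p,q) = Σ_{i=1}^{n-1} F_i(p,q). -/
open Polynomial Finset

variable {R : Type*} [CommRing R]

/-- The p,q-Fibonacci polynomials: F_0 = 0, F_1 = q, F_2 = q^2,
    F_n = q*F_{n-1} + p*F_{n-2} for n ≥ 3. -/
def fibP (p q : R) : ℕ → R
  | 0 => 0
  | 1 => q
  | 2 => q ^ 2
  | n + 3 => q * fibP p q (n + 2) + p * fibP p q (n + 1)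

/-- cf_{n,k}(p,q): cf_{0,0}=1, cf_{n,k}=0 if k>n or k<0,
    cf_{n+1,k} = cf_{n,k-1} + F_n(p,q)*cf_{n,k}. -/
def cfP (p q : R) : ℕ → ℕ → R
  | 0, 0 => 1
  | 0, _ + 1 => 0
  | n + 1, 0 => fibP p q n * cfP p q n 0
  | n + 1, k + 1 => cfP p q n k + fibP p q n * cfP p q n (k + 1)

/-- Sf_{n,k}(p,q): Sf_{0,0}=1, Sf_{n,k}=0 if k>n or k<0,
    Sf_{n+1,k} = Sf_{n,k-1} + F_k(p,q)*Sf_{n,k}. -/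
def SfP (p q : R) : ℕ → ℕ → R
  | 0, 0 => 1
  | 0, _ + 1 => 0
  | n + 1, 0 => fibP p q 0 * SfP p q n 0
  | n + 1, k + 1 => SfP p q n k + fibP p q (k + 1) * SfP p q n (k + 1)

/-- sf_{n,k}(p,q): sf_{0,0}=1, sf_{n,k}=0 if k>n or k<0,
    sf_{n+1,k} = sf_{n,k-1} - F_n(p,q)*sf_{n,k}. -/
def sfP (p q : R) : ℕ → ℕ → R
  | 0, 0 => 1
  | 0, _ + 1 => 0
  | n + 1, 0 => - (fibP p q n * sfP p q n 0)
  | n + 1, k + 1 => sfP p q n k - fibP p q n * sfP p q n (k + 1)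

lemma SfP_zero (p q : R) : ∀ n k, n < k → SfP p q n k = 0 := by
  intro n
  induction n with
  | zero => intro k hk; match k, hk with
    | k + 1, _ => rfl
  | succ n ih =>
    intro k hk
    match k, hk with
    | k + 1, hk =>
      rw [SfP, ih k (by omega), ih (k+1) (by omega)]
      ring

lemma cfP_zero (p q : R) : ∀ n k, n < k → cfP p q n k = 0 := by
  intro n
  induction n with
  | zero => intro k hk; match k, hk with
    | k + 1, _ => rfl
  | succ n ih =>
    intro k hk
    match k, hk with
    | k + 1, hk =>
      rw [cfP, ih k (by omega), ih (k+1) (by omega)]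
      ring

lemma SfP_diag (p q : R) : ∀ n, SfP p q n n = 1 := by
  intro n
  induction n with
  | zero => rfl
  | succ n ih => rw [SfP, ih, SfP_zero p q n (n+1) (by omega)]; ring

lemma cfP_diag (p q : R) : ∀ n, cfP p q n n = 1 := by
  intro n
  induction n with
  | zero => rfl
  | succ n ih => rw [cfP, ih, cfP_zero p q n (n+1) (by omega)]; ring

theorem SfP_cfP_pred (p q : R) (n : ℕ) (hn : 2 ≤ n) :
    SfP p q n (n - 1) = ∑ i ∈ Finset.Icc 1 (n - 1), fibP p q i ∧
    cfP p q n (n - 1) = ∑ i ∈ Finset.Icc 1 (n - 1), fibP p q i := by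
  induction n with
  | zero => omega
  | succ n ih =>
    rcases Nat.lt_or_ge n 2 with h | h
    · interval_cases n
      · omega
      · constructor
        · show SfP p q 2 1 = _
          simp [SfP, fibP]
        · show cfP p q 2 1 = _
          simp [cfP, fibP]
    · obtain ⟨h1, h2⟩ := ih h
      obtain ⟨m, rfl⟩ : ∃ m, n = m + 1 := ⟨n - 1, by omega⟩
      simp only [Nat.add_sub_cancel] at h1 h2 ⊢
      constructor
      · rw [show m + 1 + 1 = (m + 1) + 1 from rfl, SfP, h1,
          SfP_diag, Finset.sum_Icc_succ_top (by omega)]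
        ring
      · rw [show m + 1 + 1 = (m + 1) + 1 from rfl, cfP, h2,
          cfP_diag, Finset.sum_Icc_succ_top (by omega)]
        ring
end

section
/- For all n ≥ 4 and s ≥ 0, the coefficient of p^s in Sf_{n,4}(p,1) equals (2^{s+1}−1)·C(n−1, s+3). -/
open Polynomial Finset

variable {R : Type*} [CommRing R]

lemma fib3' : fibP (X : ℤ[X]) 1 3 = 1 + X := by simp [fibP]
lemma fib4' : fibP (X : ℤ[X]) 1 4 = 1 + 2*X := by simp [fibP]; ring

lemma L0 (n : ℕ) : SfP (X : ℤ[X]) 1 (n+1) 0 = 0 := by simp [SfP, fibP]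

lemma L1 (n : ℕ) : SfP (X : ℤ[X]) 1 (n+1) 1 = 1 := by
  induction n with
  | zero => simp [SfP, fibP]
  | succ m ih =>
    show SfP (X : ℤ[X]) 1 (m+1) 0 + fibP (X : ℤ[X]) 1 1 * SfP (X : ℤ[X]) 1 (m+1) 1 = 1
    rw [L0, ih]; simp [fibP]

lemma L2 (n : ℕ) : SfP (X : ℤ[X]) 1 (n+1) 2 = (n : ℤ[X]) := by
  induction n with
  | zero => simp [SfP, fibP]
  | succ m ih =>
    show SfP (X : ℤ[X]) 1 (m+1) 1 + fibP (X : ℤ[X]) 1 2 * SfP (X : ℤ[X]) 1 (m+1) 2 = _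
    rw [L1, ih]
    push_cast
    simp [fibP]; ring

lemma L33 : SfP (X : ℤ[X]) 1 3 3 = 1 := by
  have h23 : SfP (X : ℤ[X]) 1 2 3 = 0 := by simp [SfP, fibP]
  show SfP (X:ℤ[X]) 1 2 2 + fibP (X:ℤ[X]) 1 3 * SfP (X:ℤ[X]) 1 2 3 = 1
  rw [h23, show SfP (X:ℤ[X]) 1 2 2 = ((1:ℕ) : ℤ[X]) from L2 1]
  simp

lemma L3 (n s : ℕ) : (SfP (X : ℤ[X]) 1 (n+3) 3).coeff s = ((n+2).choose (s+2) : ℤ) := by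
  induction n generalizing s with
  | zero =>
    rw [L33]
    rcases s with _ | t
    · simp
    · simp [Polynomial.coeff_one, Nat.choose_eq_zero_of_lt (by omega : 2 < t + 1 + 2)]
  | succ m ih =>
    show (SfP (X:ℤ[X]) 1 (m+3) 2 + fibP (X:ℤ[X]) 1 3 * SfP (X:ℤ[X]) 1 (m+3) 3).coeff s = _
    rw [show SfP (X:ℤ[X]) 1 (m+3) 2 = (((m+2:ℕ)) : ℤ[X]) from L2 (m+2), fib3']
    have pascal : (m+3).choose (s+2) = (m+2).choose (s+1) + (m+2).choose (s+2) :=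
      Nat.choose_succ_succ' (m+2) (s+1)
    rcases s with _ | t
    · simp [add_mul, mul_coeff_zero, ih, pascal, Nat.choose_one_right]
    · simp [add_mul, coeff_X_mul, ih, pascal]
      ring

lemma L4 (n s : ℕ) :
    (SfP (X:ℤ[X]) 1 (n+4) 4).coeff s = ((2^(s+1)-1) * (n+3).choose (s+3) : ℤ) := by
  induction n generalizing s with
  | zero =>
    have h34 : SfP (X:ℤ[X]) 1 3 4 = 0 := by simp [SfP, fibP]
    have h44 : SfP (X:ℤ[X]) 1 4 4 = 1 := by
      show SfP (X:ℤ[X]) 1 3 3 + fibP (X:ℤ[X]) 1 4 * SfP (X:ℤ[X]) 1 3 4 = 1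
      rw [h34, L33]; ring
    rw [h44]
    rcases s with _ | t
    · simp
    · simp [Polynomial.coeff_one, Nat.choose_eq_zero_of_lt (by omega : 3 < t + 1 + 3)]
  | succ m ih =>
    show (SfP (X:ℤ[X]) 1 (m+4) 3 + fibP (X:ℤ[X]) 1 4 * SfP (X:ℤ[X]) 1 (m+4) 4).coeff s = _
    rw [fib4']
    have h3 : ∀ u, (SfP (X:ℤ[X]) 1 (m+4) 3).coeff u = ((m+3).choose (u+2) : ℤ) :=
      fun u => L3 (m+1) u
    have pascal : (m+4).choose (s+3) = (m+3).choose (s+2) + (m+3).choose (s+3) :=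
      Nat.choose_succ_succ' (m+3) (s+2)
    rcases s with _ | t
    · simp [add_mul, mul_coeff_zero, mul_assoc, ih, h3, pascal]
    · simp [add_mul, mul_assoc, coeff_X_mul, ih, h3, pascal]
      ring

theorem SfP_four_coeff (n s : ℕ) (hn : 4 ≤ n) :
    (SfP (Polynomial.X : Polynomial ℤ) 1 n 4).coeff s =
      ((2 ^ (s + 1) - 1) * (n - 1).choose (s + 3) : ℤ) := by
  obtain ⟨m, rfl⟩ : ∃ m, n = m + 4 := ⟨n - 4, by omega⟩
  have h : m + 4 - 1 = m + 3 := rfl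
  rw [h]
  exact L4 m s
end

section
/- For all n ≥ 5, the coefficient of p^2 in cf_{n,1}(p,q) equals (3·C(n−1,4) − C(n−3,2))·q^{C(n,2)−4}, and this coefficient is 0 for n ≤ 4. -/
open Polynomial Finset

variable {R : Type*} [CommRing R]

section Aux

open Polynomial

noncomputable def Fb (n : ℕ) : Polynomial (Polynomial ℤ) :=
  fibP (Polynomial.X : Polynomial (Polynomial ℤ)) (Polynomial.C Polynomial.X) n

noncomputable def aa (n : ℕ) : Polynomial (Polynomial ℤ) :=
  cfP (Polynomial.X : Polynomial (Polynomial ℤ)) (Polynomial.C Polynomial.X) n 1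

lemma coeff_mul_one' (f g : Polynomial (Polynomial ℤ)) :
    (f*g).coeff 1 = f.coeff 0 * g.coeff 1 + f.coeff 1 * g.coeff 0 := by
  rw [Polynomial.coeff_mul, Finset.Nat.sum_antidiagonal_eq_sum_range_succ_mk]
  simp [Finset.sum_range_succ]

lemma coeff_mul_two' (f g : Polynomial (Polynomial ℤ)) :
    (f*g).coeff 2 = f.coeff 0 * g.coeff 2 + f.coeff 1 * g.coeff 1 + f.coeff 2 * g.coeff 0 := by
  rw [Polynomial.coeff_mul, Finset.Nat.sum_antidiagonal_eq_sum_range_succ_mk]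
  simp [Finset.sum_range_succ]

lemma Fb_rec (n : ℕ) : Fb (n+3) = C X * Fb (n+2) + X * Fb (n+1) := rfl

lemma Fb_one : Fb 1 = C X := rfl
lemma Fb_two : Fb 2 = C (X ^ 2) := by rw [C_pow]; rfl

lemma ch2 (m : ℕ) : (m+2).choose 2 = (m+1).choose 2 + (m+1) := by
  rw [Nat.choose_succ_succ, Nat.choose_one_right, Nat.add_comm]

lemma Fb0 : ∀ n : ℕ, (Fb (n+1)).coeff 0 = X ^ (n+1) := by
  have key : ∀ n : ℕ, (Fb (n+1)).coeff 0 = X ^ (n+1)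
      ∧ (Fb (n+2)).coeff 0 = X ^ (n+2) := by
    intro n
    induction n with
    | zero =>
      constructor
      · rw [Fb_one, coeff_C]; simp
      · rw [Fb_two, coeff_C]; simp
    | succ n ih =>
      refine ⟨ih.2, ?_⟩
      rw [Fb_rec, coeff_add, coeff_C_mul, mul_coeff_zero, coeff_X_zero, zero_mul,
        add_zero, ih.2]
      ring
  exact fun n => (key n).1

lemma Fb1_rec (n : ℕ) : (Fb (n+3)).coeff 1 = X * (Fb (n+2)).coeff 1 + (Fb (n+1)).coeff 0 := by
  rw [Fb_rec, coeff_add, coeff_C_mul, coeff_X_mul]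

lemma Fb2_rec (n : ℕ) : (Fb (n+3)).coeff 2 = X * (Fb (n+2)).coeff 2 + (Fb (n+1)).coeff 1 := by
  rw [Fb_rec, coeff_add, coeff_C_mul, show (2:ℕ) = 1+1 from rfl, coeff_X_mul]

lemma Fb1_small : (Fb 0).coeff 1 = 0 ∧ (Fb 1).coeff 1 = 0 ∧ (Fb 2).coeff 1 = 0 := by
  refine ⟨?_, ?_, ?_⟩
  · show (0 : Polynomial (Polynomial ℤ)).coeff 1 = 0; simp
  · rw [Fb_one, coeff_C]; simp
  · rw [Fb_two, coeff_C]; simp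

lemma Fb1 : ∀ m : ℕ, (Fb (m+3)).coeff 1 = ((m+1 : ℕ) : Polynomial ℤ) * X ^ (m+1) := by
  intro m
  induction m with
  | zero =>
    rw [Fb1_rec, Fb1_small.2.2, Fb0 0]
    simp
  | succ m ih =>
    rw [Fb1_rec, ih, Fb0 (m+1)]
    push_cast
    ring

lemma Fb2_small : (Fb 0).coeff 2 = 0 ∧ (Fb 1).coeff 2 = 0 ∧ (Fb 2).coeff 2 = 0
    ∧ (Fb 3).coeff 2 = 0 ∧ (Fb 4).coeff 2 = 0 := by
  have h0 : (Fb 0).coeff 2 = 0 := by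
    show (0 : Polynomial (Polynomial ℤ)).coeff 2 = 0; simp
  have h1 : (Fb 1).coeff 2 = 0 := by rw [Fb_one, coeff_C]; simp
  have h2 : (Fb 2).coeff 2 = 0 := by rw [Fb_two, coeff_C]; simp
  have h3 : (Fb 3).coeff 2 = 0 := by
    rw [Fb2_rec 0, h2, Fb1_small.2.1]; ring
  have h4 : (Fb 4).coeff 2 = 0 := by
    rw [Fb2_rec 1, h3, Fb1_small.2.2]; ring
  exact ⟨h0, h1, h2, h3, h4⟩

lemma Fb2 : ∀ m : ℕ, (Fb (m+5)).coeff 2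
    = (((m+2).choose 2 : ℕ) : Polynomial ℤ) * X ^ (m+1) := by
  intro m
  induction m with
  | zero =>
    have h : (Fb 5).coeff 2 = X * (Fb 4).coeff 2 + (Fb 3).coeff 1 := Fb2_rec 2
    have hF1 : (Fb 3).coeff 1 = ((1 : ℕ) : Polynomial ℤ) * X ^ 1 := Fb1 0
    rw [show (0:ℕ)+5 = 5 from rfl, h, Fb2_small.2.2.2.2, hF1]
    norm_num [Nat.choose]
  | succ m ih =>
    have h : (Fb (m+6)).coeff 2 = X * (Fb (m+5)).coeff 2 + (Fb (m+4)).coeff 1 := Fb2_rec (m+3)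
    have hF1 : (Fb (m+4)).coeff 1 = ((m+2 : ℕ) : Polynomial ℤ) * X ^ (m+2) := Fb1 (m+1)
    have hc : (m+3).choose 2 = (m+2).choose 2 + (m+2) := ch2 (m+1)
    show (Fb (m+6)).coeff 2 = (((m+3).choose 2 : ℕ) : Polynomial ℤ) * X ^ (m+2)
    rw [h, ih, hF1, hc]
    push_cast
    ring

lemma cf_zero : ∀ n : ℕ,
    cfP (Polynomial.X : Polynomial (Polynomial ℤ)) (Polynomial.C Polynomial.X) (n+1) 0 = 0 := by
  intro n
  induction n with
  | zero =>
    show fibP _ _ 0 * cfP _ _ 0 0 = 0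
    show (0 : Polynomial (Polynomial ℤ)) * _ = 0
    rw [zero_mul]
  | succ n ih =>
    show fibP _ _ (n+1) * cfP _ _ (n+1) 0 = 0
    rw [ih, mul_zero]

lemma aa_one : aa 1 = 1 := by
  show cfP _ _ 0 0 + fibP _ _ 0 * cfP _ _ 0 1 = 1
  show (1 : Polynomial (Polynomial ℤ)) + 0 * 0 = 1
  ring

lemma aa_succ (n : ℕ) : aa (n+2) = Fb (n+1) * aa (n+1) := by
  show cfP _ _ (n+1) 0 + fibP _ _ (n+1) * cfP _ _ (n+1) 1 = _
  rw [cf_zero n, zero_add]; rfl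

lemma A0 : ∀ m : ℕ, (aa (m+1)).coeff 0 = X ^ ((m+1).choose 2) := by
  intro m
  induction m with
  | zero => rw [show (0:ℕ)+1 = 1 from rfl, aa_one]; simp
  | succ m ih =>
    have hs : aa (m+2) = Fb (m+1) * aa (m+1) := aa_succ m
    have hc : (m+2).choose 2 = (m+1).choose 2 + (m+1) := ch2 m
    show (aa (m+2)).coeff 0 = X ^ ((m+2).choose 2)
    rw [hs, mul_coeff_zero, Fb0 m, ih, hc, ← pow_add]
    ring_nf

lemma A1_small : (aa 1).coeff 1 = 0 ∧ (aa 2).coeff 1 = 0 ∧ (aa 3).coeff 1 = 0 := by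
  have h1 : (aa 1).coeff 1 = 0 := by rw [aa_one, Polynomial.coeff_one]; norm_num
  have h2 : (aa 2).coeff 1 = 0 := by
    rw [aa_succ 0, coeff_mul_one', aa_one, Fb1_small.2.1]
    simp [Polynomial.coeff_one]
  have h3 : (aa 3).coeff 1 = 0 := by
    rw [aa_succ 1, coeff_mul_one', h2, Fb1_small.2.2]
    simp
  exact ⟨h1, h2, h3⟩

lemma A1 : ∀ m : ℕ, (aa (m+4)).coeff 1
    = (((m+2).choose 2 : ℕ) : Polynomial ℤ) * X ^ ((m+4).choose 2 - 2) := by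
  intro m
  have hge : ∀ k : ℕ, 6 ≤ (k+4).choose 2 := fun k => by
    calc (6:ℕ) = (4).choose 2 := by decide
    _ ≤ (k+4).choose 2 := Nat.choose_le_choose 2 (by omega)
  induction m with
  | zero =>
    have hs : aa 4 = Fb 3 * aa 3 := aa_succ 2
    have hF0 : (Fb 3).coeff 0 = X ^ 3 := Fb0 2
    have hF1 : (Fb 3).coeff 1 = ((1 : ℕ) : Polynomial ℤ) * X ^ 1 := Fb1 0
    have hA0 : (aa 3).coeff 0 = X ^ ((3).choose 2) := A0 2
    show (aa 4).coeff 1 = (((2).choose 2 : ℕ) : Polynomial ℤ) * X ^ ((4).choose 2 - 2)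
    rw [hs, coeff_mul_one', A1_small.2.2, hF0, hF1, hA0]
    norm_num [Nat.choose]
    ring
  | succ m ih =>
    have hs : aa (m+5) = Fb (m+4) * aa (m+4) := aa_succ (m+3)
    have hF0 : (Fb (m+4)).coeff 0 = X ^ (m+4) := Fb0 (m+3)
    have hF1 : (Fb (m+4)).coeff 1 = ((m+2 : ℕ) : Polynomial ℤ) * X ^ (m+2) := Fb1 (m+1)
    have hA0 : (aa (m+4)).coeff 0 = X ^ ((m+4).choose 2) := A0 (m+3)
    obtain ⟨e, he⟩ : ∃ e, (m+4).choose 2 = e + 2 := ⟨(m+4).choose 2 - 2, by have := hge m; omega⟩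
    have h2 : (m+5).choose 2 = (m+4).choose 2 + (m+4) := ch2 (m+3)
    have hgc : (m+3).choose 2 = (m+2).choose 2 + (m+2) := ch2 (m+1)
    have he1 : (m+5).choose 2 - 2 = e + (m+4) := by omega
    have he0 : (m+4).choose 2 - 2 = e := by omega
    show (aa (m+5)).coeff 1 = (((m+3).choose 2 : ℕ) : Polynomial ℤ) * X ^ ((m+5).choose 2 - 2)
    rw [hs, coeff_mul_one', ih, hF0, hF1, hA0, he0, he, he1, hgc]
    push_cast
    ring

lemma A2_small : (aa 1).coeff 2 = 0 ∧ (aa 2).coeff 2 = 0 ∧ (aa 3).coeff 2 = 0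
    ∧ (aa 4).coeff 2 = 0 := by
  have h1 : (aa 1).coeff 2 = 0 := by rw [aa_one, Polynomial.coeff_one]; norm_num
  have h2 : (aa 2).coeff 2 = 0 := by
    rw [aa_succ 0, coeff_mul_two', aa_one, Fb1_small.2.1, Fb2_small.2.1]
    simp [Polynomial.coeff_one]
  have h3 : (aa 3).coeff 2 = 0 := by
    rw [aa_succ 1, coeff_mul_two', h2, A1_small.2.1, Fb1_small.2.2, Fb2_small.2.2.1]
    simp
  have h4 : (aa 4).coeff 2 = 0 := by
    rw [aa_succ 2, coeff_mul_two', h3, A1_small.2.2, Fb2_small.2.2.2.1]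
    simp
  exact ⟨h1, h2, h3, h4⟩

lemma zid (m : ℕ) : (3*(m+5).choose 4 - (m+3).choose 2 : ℤ)
    = (3*(m+4).choose 4 - (m+2).choose 2 : ℤ)
      + (m+3) * (m+3).choose 2 + (m+2).choose 2 := by
  have c2 : ∀ k : ℕ, ((k+2).choose 2 : ℤ) * 2 = (k+2)*(k+1) := by
    intro k
    induction k with
    | zero => decide
    | succ k ih =>
      have h : (k+3).choose 2 = (k+2).choose 2 + (k+2) := ch2 (k+1)
      show ((k+3).choose 2 : ℤ) * 2 = (k+3)*(k+2)
      rw [h]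
      push_cast at ih ⊢
      nlinarith [ih]
  have c3 : ∀ k : ℕ, ((k+3).choose 3 : ℤ) * 6 = (k+3)*(k+2)*(k+1) := by
    intro k
    induction k with
    | zero => decide
    | succ k ih =>
      have h : (k+4).choose 3 = (k+3).choose 2 + (k+3).choose 3 :=
        Nat.choose_succ_succ (k+3) 2
      have h2 := c2 (k+1)
      show ((k+4).choose 3 : ℤ) * 6 = (k+4)*(k+3)*(k+2)
      rw [h]
      push_cast at ih h2 ⊢
      nlinarith [ih, h2]
  have c4 : ∀ k : ℕ, ((k+4).choose 4 : ℤ) * 24 = (k+4)*(k+3)*(k+2)*(k+1) := by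
    intro k
    induction k with
    | zero => decide
    | succ k ih =>
      have h : (k+5).choose 4 = (k+4).choose 3 + (k+4).choose 4 :=
        Nat.choose_succ_succ (k+4) 3
      have h3 := c3 (k+1)
      show ((k+5).choose 4 : ℤ) * 24 = (k+5)*(k+4)*(k+3)*(k+2)
      rw [h]
      push_cast at ih h3 ⊢
      nlinarith [ih, h3]
  have h1 := c4 (m+1)
  have h2 := c4 m
  have h3 := c2 (m+1)
  have h4 := c2 m
  push_cast at h1 h2 h3 h4 ⊢
  nlinarith [h1, h2, h3, h4]

lemma A2 : ∀ m : ℕ, (aa (m+5)).coeff 2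
    = ((3 * (m+4).choose 4 - (m+2).choose 2 : ℤ) : Polynomial ℤ)
      * X ^ ((m+5).choose 2 - 4) := by
  intro m
  have hge : ∀ k : ℕ, 10 ≤ (k+5).choose 2 := fun k => by
    calc (10:ℕ) = (5).choose 2 := by decide
    _ ≤ (k+5).choose 2 := Nat.choose_le_choose 2 (by omega)
  induction m with
  | zero =>
    have hs : aa 5 = Fb 4 * aa 4 := aa_succ 3
    have hF0 : (Fb 4).coeff 0 = X ^ 4 := Fb0 3
    have hF1 : (Fb 4).coeff 1 = ((2 : ℕ) : Polynomial ℤ) * X ^ 2 := Fb1 1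
    have hF2 : (Fb 4).coeff 2 = 0 := Fb2_small.2.2.2.2
    have hA0 : (aa 4).coeff 0 = X ^ ((4).choose 2) := A0 3
    have hA1 : (aa 4).coeff 1
        = (((2).choose 2 : ℕ) : Polynomial ℤ) * X ^ ((4).choose 2 - 2) := A1 0
    show (aa 5).coeff 2
        = ((3 * (4).choose 4 - (2).choose 2 : ℤ) : Polynomial ℤ) * X ^ ((5).choose 2 - 4)
    rw [hs, coeff_mul_two', A2_small.2.2.2, hA0, hA1, hF0, hF1, hF2]
    norm_num [Nat.choose]
    ring
  | succ m ih =>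
    have hs : aa (m+6) = Fb (m+5) * aa (m+5) := aa_succ (m+4)
    have hF0 : (Fb (m+5)).coeff 0 = X ^ (m+5) := Fb0 (m+4)
    have hF1 : (Fb (m+5)).coeff 1 = ((m+3 : ℕ) : Polynomial ℤ) * X ^ (m+3) := Fb1 (m+2)
    have hF2 : (Fb (m+5)).coeff 2 = (((m+2).choose 2 : ℕ) : Polynomial ℤ) * X ^ (m+1) := Fb2 m
    have hA0 : (aa (m+5)).coeff 0 = X ^ ((m+5).choose 2) := A0 (m+4)
    have hA1 : (aa (m+5)).coeff 1
        = (((m+3).choose 2 : ℕ) : Polynomial ℤ) * X ^ ((m+5).choose 2 - 2) := A1 (m+1)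
    obtain ⟨e, he⟩ : ∃ e, (m+5).choose 2 = e + 4 :=
      ⟨(m+5).choose 2 - 4, by have := hge m; omega⟩
    have h2 : (m+6).choose 2 = (m+5).choose 2 + (m+5) := ch2 (m+4)
    have he1 : (m+6).choose 2 - 4 = e + (m+5) := by omega
    have he2 : (m+5).choose 2 - 2 = e + 2 := by omega
    have he4 : (m+5).choose 2 - 4 = e := by omega
    have hz := zid m
    show (aa (m+6)).coeff 2
        = ((3 * (m+5).choose 4 - (m+3).choose 2 : ℤ) : Polynomial ℤ) * X ^ ((m+6).choose 2 - 4)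
    rw [hs, coeff_mul_two', ih, hA0, hA1, hF0, hF1, hF2, he4, he2, he, he1, hz]
    push_cast
    ring

end Aux

theorem cfP_one_coeff_p_two :
    (∀ n : ℕ, 5 ≤ n →
      (cfP (Polynomial.X : Polynomial (Polynomial ℤ)) (Polynomial.C Polynomial.X) n 1).coeff 2 =
        ((3 * (n - 1).choose 4 - (n - 3).choose 2 : ℤ) : Polynomial ℤ) *
          Polynomial.X ^ (n.choose 2 - 4)) ∧
    (∀ n : ℕ, 1 ≤ n → n ≤ 4 →
      (cfP (Polynomial.X : Polynomial (Polynomial ℤ)) (Polynomial.C Polynomial.X) n 1).coeff 2 =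
        0) := by
  constructor
  · intro n hn
    obtain ⟨m, rfl⟩ : ∃ m, n = m + 5 := ⟨n - 5, by omega⟩
    have h1 : m + 5 - 1 = m + 4 := by omega
    have h3 : m + 5 - 3 = m + 2 := by omega
    rw [h1, h3]
    exact A2 m
  · intro n h1 h4
    interval_cases n
    · exact A2_small.1
    · exact A2_small.2.1
    · exact A2_small.2.2.1
    · exact A2_small.2.2.2
end
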